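/- Let G be a graph and let m ≥ 0. Then the energy of the m-duplicate graph of G satisfies ε(Dᵐ(G)) = 2ᵐ·ε(G). -/

import Mathlib

open Matrix SimpleGraph Finset

variable {V W : Type*}

/-- The adjacency matrix of a simple graph over ℝ is Hermitian. -/
lemma adjMatrix_isHermitian [Fintype V] [DecidableEq V] (G : SimpleGraph V)
    [DecidableRel G.Adj] : (G.adjMatrix ℝ).IsHermitian := by
  rw [Matrix.IsHermitian, Matrix.conjTranspose_eq_transpose_of_trivial]
  exact G.isSymm_adjMatrix

/-- The energy of a finite simple graph: the sum of the absolute values of the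
eigenvalues of its real adjacency matrix. -/
noncomputable def graphEnergy [Fintype V] [DecidableEq V] (G : SimpleGraph V) : ℝ := by
  classical
  exact ∑ i, |(adjMatrix_isHermitian G).eigenvalues i|

/-- The spectrum of a finite simple graph: the multiset of eigenvalues (with
multiplicity) of its real adjacency matrix. -/
noncomputable def graphSpectrum [Fintype V] [DecidableEq V] (G : SimpleGraph V) : Multiset ℝ := by
  classical
  exact Finset.univ.val.map (adjMatrix_isHermitian G).eigenvalues

/-- A graph is integral if every eigenvalue of its adjacency matrix is an integer. -/
def IsIntegralGraph [Fintype V] [DecidableEq V] (G : SimpleGraph V) : Prop :=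
  ∀ x ∈ graphSpectrum G, ∃ k : ℤ, x = (k : ℝ)

/-- The m-shadow graph of `G`, on vertex set `Fin m × V`: `(i,u)` and `(j,v)` are
adjacent iff `u` and `v` are adjacent in `G`. -/
def shadowGraph (m : ℕ) (G : SimpleGraph V) : SimpleGraph (Fin m × V) where
  Adj x y := G.Adj x.2 y.2
  symm := ⟨fun _ _ h => h.symm⟩
  loopless := ⟨fun _ h => (G.ne_of_adj h) rfl⟩

/-- The duplicate graph of `G`, on vertex set `V ⊕ V`: `inl a` is adjacent to
`inr b` iff `a` and `b` are adjacent in `G`; no other adjacencies. -/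
def duplicateGraph (G : SimpleGraph V) : SimpleGraph (V ⊕ V) where
  Adj x y :=
    match x, y with
    | Sum.inl a, Sum.inr b => G.Adj a b
    | Sum.inr a, Sum.inl b => G.Adj a b
    | _, _ => False
  symm := ⟨by rintro (a | a) (b | b) h <;> first | exact h.symm | exact h.elim⟩
  loopless := ⟨by rintro (a | a) h <;> exact h⟩

/-- The Kronecker (tensor) product of two simple graphs. -/
def tensorGraph (G : SimpleGraph V) (H : SimpleGraph W) : SimpleGraph (V × W) where
  Adj x y := G.Adj x.1 y.1 ∧ H.Adj x.2 y.2
  symm := ⟨fun _ _ h => ⟨h.1.symm, h.2.symm⟩⟩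
  loopless := ⟨fun _ h => (G.ne_of_adj h.1) rfl⟩

/-- The m-splitting graph of `G`, on vertex set `V ⊕ (Fin m × V)`: original
vertices keep their adjacencies, an original vertex `u` is adjacent to a copy
`(i,v)` iff `u` is adjacent to `v` in `G`, and copies are pairwise non-adjacent. -/
def splittingGraph (m : ℕ) (G : SimpleGraph V) : SimpleGraph (V ⊕ (Fin m × V)) where
  Adj x y :=
    match x, y with
    | Sum.inl u, Sum.inl v => G.Adj u v
    | Sum.inl u, Sum.inr iv => G.Adj u iv.2
    | Sum.inr iu, Sum.inl v => G.Adj iu.2 v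
    | Sum.inr _, Sum.inr _ => False
  symm := ⟨by rintro (u | iu) (v | iv) h <;> first | exact h.symm | exact h.elim⟩
  loopless := ⟨by rintro (u | iu) h <;> first | exact (G.ne_of_adj h) rfl | exact h⟩

/-- The join of two simple graphs: their disjoint union together with all edges
between the two parts. -/
def joinGraph (G : SimpleGraph V) (H : SimpleGraph W) : SimpleGraph (V ⊕ W) where
  Adj x y :=
    match x, y with
    | Sum.inl a, Sum.inl b => G.Adj a b
    | Sum.inr a, Sum.inr b => H.Adj a b
    | _, _ => True
  symm := ⟨by rintro (a | a) (b | b) h <;> first | exact h.symm | trivial⟩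
  loopless := ⟨by rintro (a | a) h <;> first | exact (G.ne_of_adj h) rfl | exact (H.ne_of_adj h) rfl⟩

/-- The superpath graph on a sequence of part sizes: independent sets `W i` of
size `a i`, where vertices in parts `i` and `j` are adjacent iff `|i - j| = 1`. -/
def superpathGraph {t : ℕ} (a : Fin t → ℕ) : SimpleGraph (Σ i : Fin t, Fin (a i)) where
  Adj x y := (x.1 : ℕ) + 1 = (y.1 : ℕ) ∨ (y.1 : ℕ) + 1 = (x.1 : ℕ)
  symm := ⟨fun _ _ h => h.symm⟩
  loopless := ⟨fun x h => by omega⟩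

/-- The vertex type of the m-fold duplicate graph. -/
def iterDupVertex (V : Type*) (m : ℕ) : Type _ :=
  Nat.rec V (fun _ T => T ⊕ T) m

instance instFintypeIterDupVertex {V : Type*} [Fintype V] : ∀ m, Fintype (iterDupVertex V m)
  | 0 => inferInstanceAs (Fintype V)
  | m + 1 =>
    letI := instFintypeIterDupVertex (V := V) m
    inferInstanceAs (Fintype (iterDupVertex V m ⊕ iterDupVertex V m))

instance instDecidableEqIterDupVertex {V : Type*} [DecidableEq V] :
    ∀ m, DecidableEq (iterDupVertex V m)
  | 0 => inferInstanceAs (DecidableEq V)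
  | m + 1 =>
    letI := instDecidableEqIterDupVertex (V := V) m
    inferInstanceAs (DecidableEq (iterDupVertex V m ⊕ iterDupVertex V m))

/-- The m-duplicate graph: `D⁰(G) = G` and `Dᵐ⁺¹(G) = D(Dᵐ(G))`. -/
def iterDup (G : SimpleGraph V) : ∀ m, SimpleGraph (iterDupVertex V m)
  | 0 => G
  | m + 1 => duplicateGraph (iterDup G m)

/-! The adjacency matrix of `D(G)` is the block matrix `[[0, A], [A, 0]]`. Block shears turn it
into a block-triangular matrix, so its characteristic polynomial is `χ_A · χ_{-A}` and the
spectrum of `D(G)` is that of `G` together with its negative. Hence `ε(D(G)) = 2 ε(G)`, and the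
theorem follows by induction on `m`. -/

namespace Matrix

open Polynomial

variable {n R : Type*} [Fintype n] [DecidableEq n] [CommRing R]

theorem det_fromBlocks_eq_det_add_mul_det_sub (P Q : Matrix n n R) :
    (fromBlocks P Q Q P).det = (P + Q).det * (P - Q).det := by
  have h : fromBlocks 1 1 0 1 * fromBlocks P Q Q P * fromBlocks 1 (-1) 0 1 =
      fromBlocks (P + Q) 0 Q (P - Q) := by
    simp only [fromBlocks_multiply, Matrix.one_mul, Matrix.mul_one, Matrix.zero_mul,
      Matrix.mul_zero, Matrix.mul_neg, add_zero, zero_add]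
    congr 1 <;> abel
  simpa [det_fromBlocks_zero₂₁, det_fromBlocks_zero₁₂] using congrArg det h

theorem charpoly_fromBlocks_antidiag (A : Matrix n n R) :
    (fromBlocks 0 A A 0).charpoly = A.charpoly * (-A).charpoly := by
  rw [charpoly, charmatrix_fromBlocks, det_fromBlocks_eq_det_add_mul_det_sub]
  congr 2 <;> ext i j : 1 <;> by_cases h : i = j <;> simp [h, sub_eq_add_neg]

theorem charpoly_neg (A : Matrix n n R) :
    (-A).charpoly = (-1) ^ Fintype.card n * A.charpoly.comp (-X) := by
  have h : (charmatrix A).map (compRingHom (-X)) = -charmatrix (-A) := by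
    ext i j : 1
    by_cases h : i = j <;> simp [h, sub_eq_add_neg, add_comm]
  unfold charpoly
  rw [← coe_compRingHom_apply, RingHom.map_det, RingHom.mapMatrix_apply, h, det_neg,
    ← mul_assoc, ← mul_pow, neg_one_mul, neg_neg, one_pow, one_mul]

theorem roots_charpoly_neg [IsDomain R] (A : Matrix n n R) :
    (-A).charpoly.roots = A.charpoly.roots.map Neg.neg := by
  rw [charpoly_neg, ← C_1, ← C_neg, ← C_pow, roots_C_mul _ (by simp), roots_comp_neg_X]

theorem roots_charpoly_fromBlocks_antidiag [IsDomain R] (A : Matrix n n R) :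
    (fromBlocks 0 A A 0).charpoly.roots = A.charpoly.roots + A.charpoly.roots.map Neg.neg := by
  rw [charpoly_fromBlocks_antidiag, roots_mul (mul_ne_zero (charpoly_monic _).ne_zero
    (charpoly_monic _).ne_zero), roots_charpoly_neg]

theorem IsHermitian.sum_abs_eigenvalues {A : Matrix n n ℝ} (hA : A.IsHermitian) :
    ∑ i, |hA.eigenvalues i| = (A.charpoly.roots.map abs).sum := by
  rw [hA.roots_charpoly_eq_eigenvalues, Multiset.map_map, Finset.sum_eq_multiset_sum]
  rfl

end Matrix

namespace SimpleGraph

theorem adjMatrix_duplicateGraph {α : Type*} [Zero α] [One α] (G : SimpleGraph V)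
    [DecidableRel G.Adj] [DecidableRel (duplicateGraph G).Adj] :
    (duplicateGraph G).adjMatrix α = fromBlocks 0 (G.adjMatrix α) (G.adjMatrix α) 0 := by
  ext (a | a) (b | b) <;> rw [adjMatrix_apply] <;> by_cases h : G.Adj a b <;>
    simp [duplicateGraph, h]

variable [Fintype V] [DecidableEq V]

theorem graphEnergy_eq_sum_abs_roots_charpoly (G : SimpleGraph V) [DecidableRel G.Adj] :
    graphEnergy G = ((G.adjMatrix ℝ).charpoly.roots.map abs).sum := by
  rw [graphEnergy]
  -- `graphEnergy` is built on the classical `DecidableRel G.Adj` instance, not the given one.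
  convert (adjMatrix_isHermitian G).sum_abs_eigenvalues

theorem graphEnergy_duplicateGraph (G : SimpleGraph V) :
    graphEnergy (duplicateGraph G) = 2 * graphEnergy G := by
  classical
  rw [graphEnergy_eq_sum_abs_roots_charpoly, graphEnergy_eq_sum_abs_roots_charpoly,
    adjMatrix_duplicateGraph, Matrix.roots_charpoly_fromBlocks_antidiag]
  simp [Multiset.map_map, two_mul]

end SimpleGraph

/-- The energy of the m-duplicate graph of `G` is `2^m · ε(G)`. -/
theorem energy_iterDup [Fintype V] [DecidableEq V] (G : SimpleGraph V) (m : ℕ) :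
    graphEnergy (iterDup G m) = 2 ^ m * graphEnergy G := by
  induction m with
  | zero => exact (one_mul _).symm
  | succ m ih =>
    rw [pow_succ, mul_comm _ 2, mul_assoc, ← ih]
    exact SimpleGraph.graphEnergy_duplicateGraph (iterDup G m)
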